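/- Let p be a prime, R a commutative ring of characteristic p, k ∈ ℕ, and B = MvPolynomial (Fin k) R. Given g : Fin k → B, let D be the R-derivation of B defined by D(f) = Σ_i g i * ∂_i f, and let D' be the R-linear endomorphism of B defined by D'(f) = Σ_i (g i)^p * D_{p·e_i}(f), where e_i is the indicator function of i and ∂_i the partial derivative in X_i. Then D'(f^p) = (D f)^p for all f ∈ B. (Thus D' is a lift of D satisfying the Frobenius compatibility D^{(1)}(a^p) = D(a)^p.) -/

import Mathlib

/-!
Since `f ↦ f ^ p` is additive in characteristic `p`, it suffices to prove
`D_{p e_i} (f ^ p) = (∂_i f) ^ p` for a monomial `f = c X^m`. There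
`D_{p e_i} (c^p X^{p m}) = C(p m_i, p) c^p X^{p (m - e_i)}`, and Lucas' theorem gives
`C(p m_i, p) ≡ m_i ≡ m_i ^ p (mod p)`, which is the coefficient of `(∂_i (c X^m)) ^ p`.
-/

/-- The divided-power operator `D_n` on `MvPolynomial σ R`, determined on monomials by
`D_n (X ^ m) = (∏ i, Nat.choose (m i) (n i)) • X ^ (m - n)` (componentwise truncated
subtraction). -/
noncomputable def dpOp (R : Type*) [CommRing R] (σ : Type*) [Fintype σ] (n : σ →₀ ℕ) :
    MvPolynomial σ R →ₗ[R] MvPolynomial σ R :=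
  (Finsupp.lsum ℕ fun m : σ →₀ ℕ =>
    (∏ i, Nat.choose (m i) (n i)) • (MvPolynomial.monomial (m - n) : R →ₗ[R] MvPolynomial σ R))
    ∘ₗ (AddMonoidAlgebra.coeffLinearEquiv R).toLinearMap

open MvPolynomial

theorem dpOp_monomial {R σ : Type*} [CommRing R] [Fintype σ] (n m : σ →₀ ℕ) (c : R) :
    dpOp R σ n (monomial m c) = (∏ i, (m i).choose (n i)) • monomial (m - n) c := by
  have hcoeff : (AddMonoidAlgebra.coeffLinearEquiv R).toLinearMap (monomial m c : MvPolynomial σ R)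
      = Finsupp.single m c := by
    simp [MvPolynomial.monomial, AddMonoidAlgebra.coeffLinearEquiv]
  rw [dpOp, LinearMap.comp_apply, hcoeff, Finsupp.lsum_single]
  simp

theorem natCast_pow_expChar {R : Type*} [CommSemiring R] (p : ℕ) [ExpChar R p] (n : ℕ) :
    (n : R) ^ p = n := by
  simpa only [frobenius_def] using map_natCast (frobenius R p) n

theorem CharP.natCast_choose_mul_prime {R : Type*} [CommRing R] {p : ℕ} [CharP R p]
    (hp : p.Prime) (a : ℕ) : ((p * a).choose p : R) = a := by
  have : Fact p.Prime := ⟨hp⟩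
  have hLucas := Choose.choose_mul_mul_modEq_choose_nat (p := p) (a := a) (b := 1)
  rw [mul_one, Nat.choose_one_right] at hLucas
  exact CharP.natCast_eq_natCast' R p hLucas

section Frobenius

variable {R σ : Type*} [CommRing R] [Fintype σ] {p : ℕ} [CharP R p]

theorem dpOp_monomial_pow (hp : p.Prime) (i : σ) (m : σ →₀ ℕ) (c : R) :
    dpOp R σ (p • Finsupp.single i 1) (monomial m c ^ p) = pderiv i (monomial m c) ^ p := by
  have : ExpChar R p := .prime hp
  have hchoose :
      ∏ j, ((p • m) j).choose ((p • Finsupp.single i 1) j) = (p * m i).choose p := by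
    rw [Finset.prod_eq_single i (fun j _ hj => by simp [hj.symm]) (by simp)]
    simp
  have hexp : p • m - p • Finsupp.single i 1 = p • (m - Finsupp.single i 1) := by
    ext j
    simp only [Finsupp.coe_tsub, Pi.sub_apply, Finsupp.smul_apply, smul_eq_mul, Nat.mul_sub]
  rw [monomial_pow, dpOp_monomial, pderiv_monomial, monomial_pow, hchoose, hexp, smul_monomial,
    nsmul_eq_mul, CharP.natCast_choose_mul_prime hp, mul_pow, natCast_pow_expChar, mul_comm]

theorem dpOp_pow_eq_pderiv_pow (hp : p.Prime) (i : σ) (f : MvPolynomial σ R) :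
    dpOp R σ (p • Finsupp.single i 1) (f ^ p) = pderiv i f ^ p := by
  have : Fact p.Prime := ⟨hp⟩
  induction f using MvPolynomial.induction_on' with
  | monomial m c => exact dpOp_monomial_pow hp i m c
  | add f g hf hg => rw [add_pow_char, map_add, map_add, add_pow_char, hf, hg]

end Frobenius

/-- For the derivation `D f = ∑ i, g i * ∂_i f` of `MvPolynomial (Fin k) R`, the operator
`D' f = ∑ i, (g i)^p * D_(p·e_i) f` is a Frobenius-compatible lift: `D' (f^p) = (D f)^p`. -/
theorem dpOp_lift_frobenius_compat (p : ℕ) (hp : p.Prime) (R : Type*) [CommRing R] [CharP R p]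
    (k : ℕ) (g : Fin k → MvPolynomial (Fin k) R) (f : MvPolynomial (Fin k) R) :
    (∑ i, g i ^ p * dpOp R (Fin k) (p • Finsupp.single i 1) (f ^ p))
      = (∑ i, g i * MvPolynomial.pderiv i f) ^ p := by
  have : Fact p.Prime := ⟨hp⟩
  simp only [sum_pow_char, mul_pow, dpOp_pow_eq_pderiv_pow hp]
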